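/- arXiv:2405.18045 — 3 statements merged into one kernel-verified Lean document; each statement's English description precedes it below -/
import Mathlib

section
/- Let 1 < M ≤ d+1 and let φ: ℝ → ℝ be increasing and convex, ψ: ℝ → ℝ be increasing with x ↦ ψ(α·φ(x)) convex for every α > 0. Consider the symmetric loss L_sym(U,V) = ½(L_a(U,V) + L_a(V,U)) where L_a(U,V) = (1/M) Σ_{i=1}^M ψ( Σ_{j≠i} φ((v_j − v_i)·u_i) ), minimized over all tuples U = (u_1,…,u_M), V = (v_1,…,v_M) of unit vectors in ℝ^d. Then every configuration with u_i = v_i for all i and ⟨u_i, u_j⟩ = −1/(M−1) for all i ≠ j (i.e., U forms a regular (M−1)-simplex inscribed in the unit sphere) attains the minimum of L_sym. Moreover, if φ and ψ are strictly increasing and φ is strictly convex, these configurations are the only minimizers. -/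
open scoped BigOperators RealInnerProductSpace

noncomputable section

/-- Generic mini-batch contrastive loss `L_a(U,V;φ,ψ)`. -/
def La (d M : ℕ) (φ ψ : ℝ → ℝ)
    (U V : Fin M → EuclideanSpace ℝ (Fin d)) : ℝ :=
  (1 / (M : ℝ)) * ∑ i, ψ (∑ j ∈ Finset.univ.erase i, φ ⟪V j - V i, U i⟫)

/-- Symmetrised loss `L_sym(U,V) = ½(L_a(U,V) + L_a(V,U))`. -/
def LaSym (d M : ℕ) (φ ψ : ℝ → ℝ)
    (U V : Fin M → EuclideanSpace ℝ (Fin d)) : ℝ :=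
  (La d M φ ψ U V + La d M φ ψ V U) / 2

/-!
Jensen's inequality for `φ` along each row `j ≠ i`, and then for the convex profile
`t ↦ ψ ((M - 1) * φ t)` across the rows, bounds each of `L_a(U,V)` and `L_a(V,U)` below by the
profile at the mean gap `(⟪∑ U, ∑ V⟫ - M ∑ ⟪U i, V i⟫) / (M (M - 1))`. For unit vectors
`4 (⟪∑ U, ∑ V⟫ - M ∑ ⟪U i, V i⟫ + M²) ≥ ‖∑ U + ∑ V‖² + M ∑ ‖U i - V i‖²`, so this mean is at
least `-M / (M - 1)`, the gap of an aligned regular simplex. At a minimiser under the strict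
hypotheses equality forces `U = V` and `∑ U = 0`, so every row has mean `-M / (M - 1)`, and strict
convexity of `φ` makes all gaps in a row equal. The simplex exists because the centred standard
simplex `e i - 𝟙 / M` lies in `𝟙ᗮ ⊆ ℝ^M`, of dimension `M - 1 ≤ d`.
-/

open Finset Module

section Jensen

variable {ι : Type*} {f : ℝ → ℝ} {s : Finset ι} {p : ι → ℝ}

lemma sum_const_inv_card (hs : s.Nonempty) : ∑ _i ∈ s, (#s : ℝ)⁻¹ = 1 := by
  rw [sum_const, nsmul_eq_mul, mul_inv_cancel₀ (by exact_mod_cast hs.card_pos.ne')]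

lemma ConvexOn.map_sum_div_card_le (hf : ConvexOn ℝ Set.univ f) (hs : s.Nonempty) :
    f ((∑ i ∈ s, p i) / #s) ≤ (∑ i ∈ s, f (p i)) / #s := by
  have := hf.map_sum_le (fun _ _ => by positivity) (sum_const_inv_card hs)
    (fun i _ => Set.mem_univ (p i))
  simpa only [smul_eq_mul, inv_mul_eq_div, sum_div] using this

lemma StrictConvexOn.eq_sum_div_card_of_map_eq (hf : StrictConvexOn ℝ Set.univ f)
    (h : (∑ i ∈ s, f (p i)) / #s = f ((∑ i ∈ s, p i) / #s)) {j : ι} (hj : j ∈ s) :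
    p j = (∑ i ∈ s, p i) / #s := by
  have hpos : (0 : ℝ) < (#s : ℝ)⁻¹ := inv_pos.2 (by exact_mod_cast card_pos.2 ⟨j, hj⟩)
  have := (hf.map_sum_eq_iff (fun _ _ => hpos) (sum_const_inv_card ⟨j, hj⟩)
    (fun i _ => Set.mem_univ (p i))).1
  simp only [smul_eq_mul, inv_mul_eq_div, ← sum_div] at this
  exact this h.symm j hj

end Jensen

lemma norm_sum_sub_sq_le {ι E : Type*} [Fintype ι] [SeminormedAddCommGroup E] (U V : ι → E) :
    ‖∑ i, U i - ∑ i, V i‖ ^ 2 ≤ Fintype.card ι * ∑ i, ‖U i - V i‖ ^ 2 := by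
  rw [← sum_sub_distrib]
  calc ‖∑ i, (U i - V i)‖ ^ 2 ≤ (∑ i, ‖U i - V i‖) ^ 2 := by gcongr; exact norm_sum_le _ _
    _ ≤ _ := by simpa using sq_sum_le_card_mul_sum_sq (s := univ) (f := fun i => ‖U i - V i‖)

section UnitVectors

variable {ι E : Type*} [Fintype ι] [NormedAddCommGroup E] [InnerProductSpace ℝ E]

lemma sum_erase_inner_sub [DecidableEq ι] (A B : ι → E) (i : ι) :
    ∑ j ∈ univ.erase i, ⟪B j - B i, A i⟫ = ⟪∑ j, B j, A i⟫ - Fintype.card ι * ⟪B i, A i⟫ := by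
  rw [sum_erase _ (by simp), sum_inner]
  simp [inner_sub_left, sum_sub_distrib]

lemma sum_sum_erase_inner_sub [DecidableEq ι] (A B : ι → E) :
    ∑ i, ∑ j ∈ univ.erase i, ⟪B j - B i, A i⟫
      = ⟪∑ i, B i, ∑ i, A i⟫ - Fintype.card ι * ∑ i, ⟪B i, A i⟫ := by
  simp_rw [sum_erase_inner_sub]
  rw [sum_sub_distrib, ← mul_sum, ← inner_sum]

lemma norm_sum_add_sq_add_card_mul_le {U V : ι → E} (hU : ∀ i, ‖U i‖ = 1) (hV : ∀ i, ‖V i‖ = 1) :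
    ‖∑ i, U i + ∑ i, V i‖ ^ 2 + Fintype.card ι * ∑ i, ‖U i - V i‖ ^ 2
      ≤ 4 * (⟪∑ i, U i, ∑ i, V i⟫ - Fintype.card ι * ∑ i, ⟪U i, V i⟫ + Fintype.card ι ^ 2) := by
  have hdiff : ∑ i, ‖U i - V i‖ ^ 2 = 2 * Fintype.card ι - 2 * ∑ i, ⟪U i, V i⟫ := by
    have hi (i : ι) : ‖U i - V i‖ ^ 2 = 2 - 2 * ⟪U i, V i⟫ := by
      rw [norm_sub_sq_real, hU, hV]; ring
    simp [hi, sum_sub_distrib, mul_sum, mul_comm]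
  have := norm_sum_sub_sq_le U V
  rw [norm_add_sq_real, norm_sub_sq_real] at *
  nlinarith

lemma neg_card_sq_le_inner_sum_sub {U V : ι → E} (hU : ∀ i, ‖U i‖ = 1) (hV : ∀ i, ‖V i‖ = 1) :
    -(Fintype.card ι : ℝ) ^ 2 ≤ ⟪∑ i, U i, ∑ i, V i⟫ - Fintype.card ι * ∑ i, ⟪U i, V i⟫ := by
  have := norm_sum_add_sq_add_card_mul_le hU hV
  have : 0 ≤ (Fintype.card ι : ℝ) * ∑ i, ‖U i - V i‖ ^ 2 := by positivity
  nlinarith [sq_nonneg ‖∑ i, U i + ∑ i, V i‖]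

lemma eq_and_sum_eq_zero_of_inner_sum_sub_le {U V : ι → E} (hU : ∀ i, ‖U i‖ = 1)
    (hV : ∀ i, ‖V i‖ = 1)
    (h : ⟪∑ i, U i, ∑ i, V i⟫ - Fintype.card ι * ∑ i, ⟪U i, V i⟫ ≤ -(Fintype.card ι : ℝ) ^ 2) :
    (∀ i, U i = V i) ∧ ∑ i, U i = 0 := by
  have key := norm_sum_add_sq_add_card_mul_le hU hV
  have hdiff : 0 ≤ (Fintype.card ι : ℝ) * ∑ i, ‖U i - V i‖ ^ 2 := by positivity
  have hsum : ‖∑ i, U i + ∑ i, V i‖ ^ 2 = 0 := by nlinarith [sq_nonneg ‖∑ i, U i + ∑ i, V i‖]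
  have hUV (i : ι) : U i = V i := by
    have hcard : (0 : ℝ) < Fintype.card ι := Nat.cast_pos.2 (Fintype.card_pos_iff.2 ⟨i⟩)
    have hzero : ∑ i, ‖U i - V i‖ ^ 2 = 0 := by nlinarith [sq_nonneg ‖∑ i, U i + ∑ i, V i‖]
    rw [sum_eq_zero_iff_of_nonneg fun i _ => sq_nonneg _] at hzero
    simpa [sub_eq_zero] using hzero i (mem_univ i)
  refine ⟨hUV, ?_⟩
  simp_rw [← hUV] at hsum
  simpa [← two_smul ℝ] using hsum

end UnitVectors

lemma exists_linearIsometry_of_finrank_le {E F : Type*} [NormedAddCommGroup E]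
    [InnerProductSpace ℝ E] [FiniteDimensional ℝ E] [NormedAddCommGroup F]
    [InnerProductSpace ℝ F] [FiniteDimensional ℝ F] (h : finrank ℝ E ≤ finrank ℝ F) :
    Nonempty (E →ₗᵢ[ℝ] F) := by
  let bE := stdOrthonormalBasis ℝ E
  let bF := stdOrthonormalBasis ℝ F
  let f : E →ₗ[ℝ] F := bE.toBasis.constr ℝ (bF ∘ Fin.castLE h)
  have hf : f ∘ bE.toBasis = bF ∘ Fin.castLE h := funext (bE.toBasis.constr_basis ℝ _)
  refine ⟨f.isometryOfOrthonormal (v := bE.toBasis) ?_ ?_⟩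
  · simp [bE.orthonormal]
  · rw [hf]
    exact bF.orthonormal.comp _ (Fin.castLE_injective h)

lemma exists_regular_simplex {ι F : Type*} [Fintype ι] [DecidableEq ι] [NormedAddCommGroup F]
    [InnerProductSpace ℝ F] [FiniteDimensional ℝ F] (h1 : 1 < Fintype.card ι)
    (hF : Fintype.card ι ≤ finrank ℝ F + 1) :
    ∃ W : ι → F, (∀ i, ‖W i‖ = 1) ∧
      ∀ i j, i ≠ j → ⟪W i, W j⟫ = -1 / ((Fintype.card ι : ℝ) - 1) := by
  set n : ℝ := (Fintype.card ι : ℝ)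
  have hn : 1 < n := Nat.one_lt_cast.2 h1
  have hn1 : n - 1 ≠ 0 := by linarith
  let ones : EuclideanSpace ℝ ι := WithLp.toLp 2 fun _ => 1
  have hones : ⟪ones, ones⟫ = n := by simp only [ones, PiLp.inner_apply]; simp [n]
  have hones_ne : ones ≠ 0 := fun h => by simp [h, n] at hones; linarith
  let K := (ℝ ∙ ones)ᗮ
  have hK : finrank ℝ K = Fintype.card ι - 1 :=
    Submodule.finrank_add_finrank_orthogonal' (by
      rw [finrank_span_singleton hones_ne, finrank_euclideanSpace]; omega)
  obtain ⟨L⟩ := exists_linearIsometry_of_finrank_le (E := K) (F := F) (by omega)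
  let p : ι → EuclideanSpace ℝ ι := fun i => EuclideanSpace.single i 1 - n⁻¹ • ones
  have hpK (i : ι) : p i ∈ K := by
    rw [Submodule.mem_orthogonal_singleton_iff_inner_right]
    simp only [p, inner_sub_right, real_inner_smul_right, hones, EuclideanSpace.inner_single_right]
    simp [ones, inv_mul_cancel₀ (by linarith : n ≠ 0)]
  have hp (i j : ι) : ⟪p i, p j⟫ = (if i = j then 1 else 0) - n⁻¹ := by
    simp only [p, inner_sub_left, inner_sub_right, real_inner_smul_left, real_inner_smul_right,
      hones, EuclideanSpace.inner_single_left, EuclideanSpace.inner_single_right,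
      PiLp.single_apply]
    rcases eq_or_ne i j with rfl | hij
    · simp [ones]
      field_simp
      ring
    · simp [ones, hij, hij.symm]
      field_simp
      ring
  let c := Real.sqrt (n / (n - 1))
  have hc : c * c = n / (n - 1) := Real.mul_self_sqrt (div_nonneg (by linarith) (by linarith))
  let W : ι → F := fun i => c • L ⟨p i, hpK i⟩
  have hW (i j : ι) : ⟪W i, W j⟫ = n / (n - 1) * ((if i = j then 1 else 0) - n⁻¹) := by
    simp only [W, real_inner_smul_left, real_inner_smul_right, LinearIsometry.inner_map_map,
      Submodule.coe_inner, hp, ← hc]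
    ring
  refine ⟨W, fun i => ?_, fun i j hij => ?_⟩
  · have hsq := hW i i
    rw [if_pos rfl, real_inner_self_eq_norm_sq] at hsq
    refine (pow_eq_one_iff_of_nonneg (norm_nonneg _) two_ne_zero).1 (hsq.trans ?_)
    field_simp
  · rw [hW, if_neg hij]
    field_simp
    ring

section Loss

variable {d M : ℕ} {φ ψ : ℝ → ℝ}

lemma cast_card_univ_erase (i : Fin M) : (#(univ.erase i) : ℝ) = M - 1 := by
  rw [card_erase_of_mem (mem_univ i), card_univ, Fintype.card_fin, Nat.cast_pred i.pos]

lemma inner_sub_self_eq_iff {E : Type*} [NormedAddCommGroup E] [InnerProductSpace ℝ E]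
    {u v : E} (hu : ‖u‖ = 1) (hM : 1 < M) :
    ⟪v - u, u⟫ = -M / ((M : ℝ) - 1) ↔ ⟪u, v⟫ = -1 / ((M : ℝ) - 1) := by
  have hM' : (M : ℝ) - 1 ≠ 0 := sub_ne_zero.2 (Nat.one_lt_cast.2 hM).ne'
  have : -M / ((M : ℝ) - 1) + 1 = -1 / ((M : ℝ) - 1) := by field_simp; ring
  rw [inner_sub_left, real_inner_self_eq_norm_sq, hu, real_inner_comm, one_pow,
    sub_eq_iff_eq_add, this]

lemma La_eq_of_forall_inner_eq (hM : 0 < M) {A B : Fin M → EuclideanSpace ℝ (Fin d)} {c : ℝ}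
    (h : ∀ i j, j ≠ i → ⟪B j - B i, A i⟫ = c) :
    La d M φ ψ A B = ψ ((M - 1) * φ c) := by
  have hrow (i : Fin M) : ∑ j ∈ univ.erase i, φ ⟪B j - B i, A i⟫ = (M - 1) * φ c := by
    rw [sum_congr rfl fun j hj => by rw [h i j (ne_of_mem_erase hj)], sum_const, nsmul_eq_mul,
      cast_card_univ_erase]
  simp [La, hrow, hM.ne']

lemma univ_erase_nonempty (hM : 1 < M) (i : Fin M) : (univ.erase i).Nonempty :=
  card_pos.1 (by rw [card_erase_of_mem (mem_univ i), card_univ, Fintype.card_fin]; omega)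

lemma psi_rowMean_le (hφ : ConvexOn ℝ Set.univ φ) (hψ : Monotone ψ) (hM : 1 < M)
    (A B : Fin M → EuclideanSpace ℝ (Fin d)) (i : Fin M) :
    ψ ((M - 1) * φ ((∑ j ∈ univ.erase i, ⟪B j - B i, A i⟫) / (M - 1)))
      ≤ ψ (∑ j ∈ univ.erase i, φ ⟪B j - B i, A i⟫) := by
  apply hψ
  have := hφ.map_sum_div_card_le (p := fun j => ⟪B j - B i, A i⟫) (univ_erase_nonempty hM i)
  rwa [cast_card_univ_erase, le_div_iff₀' (by linarith [(Nat.one_lt_cast (α := ℝ)).2 hM])] at this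

lemma le_La (hφ : ConvexOn ℝ Set.univ φ) (hψ : Monotone ψ)
    (hg : ConvexOn ℝ Set.univ fun t => ψ ((M - 1) * φ t)) (hM : 1 < M)
    (A B : Fin M → EuclideanSpace ℝ (Fin d)) :
    ψ ((M - 1) * φ ((⟪∑ i, B i, ∑ i, A i⟫ - M * ∑ i, ⟪B i, A i⟫) / (M * (M - 1))))
      ≤ La d M φ ψ A B := by
  have : NeZero M := ⟨by omega⟩
  set r : Fin M → ℝ := fun i => (∑ j ∈ univ.erase i, ⟪B j - B i, A i⟫) / (M - 1)
  have hmean : (∑ i, r i) / #(univ : Finset (Fin M))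
      = (⟪∑ i, B i, ∑ i, A i⟫ - M * ∑ i, ⟪B i, A i⟫) / (M * (M - 1)) := by
    simp only [r, ← sum_div, sum_sum_erase_inner_sub, card_univ, Fintype.card_fin, div_div,
      mul_comm]
  calc _ = ψ ((M - 1) * φ ((∑ i, r i) / #(univ : Finset (Fin M)))) := by rw [hmean]
    _ ≤ (∑ i, ψ ((M - 1) * φ (r i))) / #(univ : Finset (Fin M)) :=
        hg.map_sum_div_card_le univ_nonempty
    _ ≤ (∑ i, ψ (∑ j ∈ univ.erase i, φ ⟪B j - B i, A i⟫)) / #(univ : Finset (Fin M)) := by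
        gcongr with i
        exact psi_rowMean_le hφ hψ hM A B i
    _ = La d M φ ψ A B := by simp [La, div_eq_inv_mul]

lemma le_LaSym (hφ : ConvexOn ℝ Set.univ φ) (hψ : Monotone ψ)
    (hg : ConvexOn ℝ Set.univ fun t => ψ ((M - 1) * φ t)) (hM : 1 < M)
    (U V : Fin M → EuclideanSpace ℝ (Fin d)) :
    ψ ((M - 1) * φ ((⟪∑ i, U i, ∑ i, V i⟫ - M * ∑ i, ⟪U i, V i⟫) / (M * (M - 1))))
      ≤ LaSym d M φ ψ U V := by
  have hUV := le_La hφ hψ hg hM U V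
  rw [real_inner_comm (∑ i, U i), sum_congr rfl fun i _ => real_inner_comm (U i) (V i)] at hUV
  have hVU := le_La hφ hψ hg hM V U
  rw [LaSym]
  linarith

lemma neg_div_pred_eq (hM : 0 < M) : -M / ((M : ℝ) - 1) = -(M : ℝ) ^ 2 / (M * (M - 1)) := by
  have hM0 : (M : ℝ) ≠ 0 := by positivity
  rw [pow_two, neg_div, neg_div, mul_div_mul_left _ _ hM0]

lemma simplex_value_le_LaSym (hφmono : Monotone φ) (hφ : ConvexOn ℝ Set.univ φ)
    (hψ : Monotone ψ) (hg : ConvexOn ℝ Set.univ fun t => ψ ((M - 1) * φ t)) (hM : 1 < M)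
    {U V : Fin M → EuclideanSpace ℝ (Fin d)} (hU : ∀ i, ‖U i‖ = 1) (hV : ∀ i, ‖V i‖ = 1) :
    ψ ((M - 1) * φ (-M / (M - 1))) ≤ LaSym d M φ ψ U V := by
  refine le_trans (hψ ?_) (le_LaSym hφ hψ hg hM U V)
  have hM' : (0 : ℝ) ≤ M - 1 := sub_nonneg.2 (Nat.one_le_cast.2 hM.le)
  refine mul_le_mul_of_nonneg_left (hφmono ?_) hM'
  rw [neg_div_pred_eq (by omega)]
  gcongr
  simpa using neg_card_sq_le_inner_sum_sub hU hV

lemma eq_and_sum_eq_zero_of_LaSym_le (hφ : ConvexOn ℝ Set.univ φ) (hφs : StrictMono φ)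
    (hψs : StrictMono ψ) (hg : ConvexOn ℝ Set.univ fun t => ψ ((M - 1) * φ t)) (hM : 1 < M)
    {U V : Fin M → EuclideanSpace ℝ (Fin d)} (hU : ∀ i, ‖U i‖ = 1) (hV : ∀ i, ‖V i‖ = 1)
    (h : LaSym d M φ ψ U V ≤ ψ ((M - 1) * φ (-M / (M - 1)))) :
    (∀ i, U i = V i) ∧ ∑ i, U i = 0 := by
  have hM' : (0 : ℝ) < M - 1 := sub_pos.2 (Nat.one_lt_cast.2 hM)
  have hg_mono : StrictMono fun t => ψ ((M - 1) * φ t) :=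
    fun a b hab => hψs (mul_lt_mul_of_pos_left (hφs hab) hM')
  have hmean := hg_mono.le_iff_le.1 ((le_LaSym hφ hψs.monotone hg hM U V).trans h)
  refine eq_and_sum_eq_zero_of_inner_sum_sub_le hU hV ?_
  rw [neg_div_pred_eq (by omega), div_le_div_iff_of_pos_right (by positivity)] at hmean
  simpa using hmean

lemma inner_sub_eq_of_La_le (hφ : StrictConvexOn ℝ Set.univ φ) (hψ : StrictMono ψ) (hM : 1 < M)
    {A B : Fin M → EuclideanSpace ℝ (Fin d)} {c : ℝ}
    (hrow : ∀ i, ∑ j ∈ univ.erase i, ⟪B j - B i, A i⟫ = (M - 1) * c)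
    (h : La d M φ ψ A B ≤ ψ ((M - 1) * φ c)) :
    ∀ i j, j ≠ i → ⟪B j - B i, A i⟫ = c := by
  have hM' : (0 : ℝ) < M - 1 := sub_pos.2 (Nat.one_lt_cast.2 hM)
  have hmean (i : Fin M) : (∑ j ∈ univ.erase i, ⟪B j - B i, A i⟫) / (M - 1) = c := by
    rw [hrow]; field_simp
  have hlow (i : Fin M) : ψ ((M - 1) * φ c) ≤ ψ (∑ j ∈ univ.erase i, φ ⟪B j - B i, A i⟫) := by
    simpa only [hmean] using psi_rowMean_le hφ.convexOn hψ.monotone hM A B i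
  have hsum : ∑ i : Fin M, ψ ((M - 1) * φ c) = ∑ i, ψ (∑ j ∈ univ.erase i, φ ⟪B j - B i, A i⟫) := by
    refine le_antisymm (sum_le_sum fun i _ => hlow i) ?_
    have hM0 : (0 : ℝ) < M := by linarith
    rw [La, one_div, inv_mul_le_iff₀ hM0] at h
    simpa using h
  intro i j hji
  have hrowφ : ∑ j ∈ univ.erase i, φ ⟪B j - B i, A i⟫ = (M - 1) * φ c :=
    (hψ.injective ((sum_eq_sum_iff_of_le fun i _ => hlow i).1 hsum i (mem_univ i))).symm
  have := hφ.eq_sum_div_card_of_map_eq (p := fun j => ⟪B j - B i, A i⟫)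
    (by rw [cast_card_univ_erase, hmean, hrowφ]; field_simp) (mem_erase.2 ⟨hji, mem_univ j⟩)
  rwa [cast_card_univ_erase, hmean] at this

lemma LaSym_eq_of_simplex (hM : 1 < M) {U : Fin M → EuclideanSpace ℝ (Fin d)}
    (hU : ∀ i, ‖U i‖ = 1) (hsimplex : ∀ i j, i ≠ j → ⟪U i, U j⟫ = -1 / ((M : ℝ) - 1)) :
    LaSym d M φ ψ U U = ψ ((M - 1) * φ (-M / (M - 1))) := by
  have h (i j : Fin M) (hji : j ≠ i) : ⟪U j - U i, U i⟫ = -M / ((M : ℝ) - 1) :=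
    (inner_sub_self_eq_iff (hU i) hM).2 (hsimplex i j hji.symm)
  rw [LaSym, La_eq_of_forall_inner_eq (by omega) h, add_self_div_two]

lemma simplex_of_La_le (hφ : StrictConvexOn ℝ Set.univ φ) (hψ : StrictMono ψ) (hM : 1 < M)
    {U : Fin M → EuclideanSpace ℝ (Fin d)} (hU : ∀ i, ‖U i‖ = 1) (hsum : ∑ i, U i = 0)
    (h : La d M φ ψ U U ≤ ψ ((M - 1) * φ (-M / (M - 1)))) :
    ∀ i j, i ≠ j → ⟪U i, U j⟫ = -1 / ((M : ℝ) - 1) := by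
  have hM' : (M : ℝ) - 1 ≠ 0 := sub_ne_zero.2 (Nat.one_lt_cast.2 hM).ne'
  have hrow (i : Fin M) : ∑ j ∈ univ.erase i, ⟪U j - U i, U i⟫ = (M - 1) * (-M / (M - 1)) := by
    rw [sum_erase_inner_sub, hsum, inner_zero_left, real_inner_self_eq_norm_sq, hU,
      Fintype.card_fin]
    field_simp
    ring
  intro i j hij
  exact (inner_sub_self_eq_iff (hU i) hM).1 (inner_sub_eq_of_La_le hφ hψ hM hrow h i j hij.symm)

end Loss

theorem stmt_0 (d M : ℕ) (hM : 1 < M) (hMd : M ≤ d + 1)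
    (φ ψ : ℝ → ℝ)
    (hφmono : Monotone φ) (hφconv : ConvexOn ℝ Set.univ φ)
    (hψmono : Monotone ψ)
    (hψφconv : ∀ α : ℝ, 0 < α → ConvexOn ℝ Set.univ (fun x => ψ (α * φ x))) :
    -- every aligned regular-simplex configuration attains the minimum
    (∀ U V : Fin M → EuclideanSpace ℝ (Fin d),
        (∀ i, ‖U i‖ = 1) → (∀ i, ‖V i‖ = 1) →
        (∀ i, U i = V i) →
        (∀ i j, i ≠ j → ⟪U i, U j⟫ = -1 / ((M : ℝ) - 1)) →
        ∀ U' V' : Fin M → EuclideanSpace ℝ (Fin d),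
          (∀ i, ‖U' i‖ = 1) → (∀ i, ‖V' i‖ = 1) →
          LaSym d M φ ψ U V ≤ LaSym d M φ ψ U' V') ∧
    -- under strictness, these are the only minimizers
    (StrictMono φ → StrictMono ψ → StrictConvexOn ℝ Set.univ φ →
      ∀ U V : Fin M → EuclideanSpace ℝ (Fin d),
        (∀ i, ‖U i‖ = 1) → (∀ i, ‖V i‖ = 1) →
        (∀ U' V' : Fin M → EuclideanSpace ℝ (Fin d),
          (∀ i, ‖U' i‖ = 1) → (∀ i, ‖V' i‖ = 1) →
          LaSym d M φ ψ U V ≤ LaSym d M φ ψ U' V') →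
        (∀ i, U i = V i) ∧
        (∀ i j, i ≠ j → ⟪U i, U j⟫ = -1 / ((M : ℝ) - 1))) := by
  have hg := hψφconv (M - 1) (sub_pos.2 (Nat.one_lt_cast.2 hM))
  refine ⟨fun U V hU _ hUV hsimplex U' V' hU' hV' => ?_,
    fun hφs hψs hφsc U V hU hV hmin => ?_⟩
  · obtain rfl : U = V := funext hUV
    rw [LaSym_eq_of_simplex hM hU hsimplex]
    exact simplex_value_le_LaSym hφmono hφconv hψmono hg hM hU' hV'
  · obtain ⟨W, hW, hWsimplex⟩ := exists_regular_simplex (ι := Fin M)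
      (F := EuclideanSpace ℝ (Fin d)) (by simpa) (by simpa)
    rw [Fintype.card_fin] at hWsimplex
    have hle := LaSym_eq_of_simplex (φ := φ) (ψ := ψ) hM hW hWsimplex ▸ hmin W W hW hW
    obtain ⟨hUV, hsum⟩ := eq_and_sum_eq_zero_of_LaSym_le hφconv hφs hψs hg hM hU hV hle
    obtain rfl : U = V := funext hUV
    refine ⟨fun _ => rfl, simplex_of_La_le hφsc hψs hM hU hsum ?_⟩
    rwa [LaSym, add_self_div_two] at hle
end
end

section
/- Let M ≥ 2, let d ≥ 1 and let u_1,…,u_M, v_1,…,v_M be unit vectors in ℝ^d. Then M Σ_{i=1}^M (v_i·u_i) − (Σ_{i=1}^M v_i)·(Σ_{i=1}^M u_i) ≤ M². Moreover, equality holds if and only if Σ_{i=1}^M u_i = 0 and v_i = u_i for every i. -/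
open scoped BigOperators RealInnerProductSpace

/-!
With `w i = v i - u i`, `S = ∑ u i`, `T = ∑ v i` and `n` the number of vectors, unit length gives
`⟪v i, u i⟫ = 1 - ‖w i‖² / 2`, and polarization of `⟪T, S⟫` yields the identity
`n ∑ ⟪v i, u i⟫ - ⟪T, S⟫ = n² - ‖S‖² / 2 - ‖T‖² / 2 - (n ∑ ‖w i‖² - ‖∑ w i‖²) / 2`.
The last bracket is nonnegative by Cauchy–Schwarz, so the bound holds, and equality forces
`S = T = 0`; then `∑ w i = T - S = 0`, so `n ∑ ‖w i‖² = 0` and every `w i` vanishes.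
-/

open Finset

theorem norm_sum_sq_le_card_mul_sum_norm_sq {F ι : Type*} [SeminormedAddCommGroup F]
    (s : Finset ι) (w : ι → F) : ‖∑ i ∈ s, w i‖ ^ 2 ≤ #s * ∑ i ∈ s, ‖w i‖ ^ 2 :=
  (pow_le_pow_left₀ (norm_nonneg _) (norm_sum_le s w) 2).trans (sq_sum_le_card_mul_sum_sq ..)

variable {E : Type*} [NormedAddCommGroup E] [InnerProductSpace ℝ E]

theorem real_inner_eq_one_sub_norm_sub_sq_div_two {u v : E} (hu : ‖u‖ = 1) (hv : ‖v‖ = 1) :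
    ⟪v, u⟫ = 1 - ‖v - u‖ ^ 2 / 2 := by
  rw [norm_sub_sq_real, hu, hv]
  ring

section UnitVectors

variable {ι : Type*} [Fintype ι] {u v : ι → E}

theorem card_mul_sum_inner_sub_inner_sum_eq (hu : ∀ i, ‖u i‖ = 1) (hv : ∀ i, ‖v i‖ = 1) :
    (Fintype.card ι : ℝ) * ∑ i, ⟪v i, u i⟫ - ⟪∑ i, v i, ∑ i, u i⟫ =
      (Fintype.card ι : ℝ) ^ 2 - ‖∑ i, u i‖ ^ 2 / 2 - ‖∑ i, v i‖ ^ 2 / 2 -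
        ((Fintype.card ι : ℝ) * ∑ i, ‖v i - u i‖ ^ 2 - ‖∑ i, (v i - u i)‖ ^ 2) / 2 := by
  have hdiag : ∑ i, ⟪v i, u i⟫ = Fintype.card ι - (∑ i, ‖v i - u i‖ ^ 2) / 2 := by
    simp only [real_inner_eq_one_sub_norm_sub_sq_div_two (hu _) (hv _), sum_sub_distrib,
      ← sum_div, sum_const, card_univ, nsmul_eq_mul, mul_one]
  rw [hdiag, sum_sub_distrib, norm_sub_sq_real (∑ i, v i)]
  ring

theorem card_mul_sum_inner_sub_inner_sum_le (hu : ∀ i, ‖u i‖ = 1) (hv : ∀ i, ‖v i‖ = 1) :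
    (Fintype.card ι : ℝ) * ∑ i, ⟪v i, u i⟫ - ⟪∑ i, v i, ∑ i, u i⟫ ≤ (Fintype.card ι : ℝ) ^ 2 := by
  have hCS := norm_sum_sq_le_card_mul_sum_norm_sq univ fun i ↦ v i - u i
  rw [card_mul_sum_inner_sub_inner_sum_eq hu hv]
  rw [card_univ] at hCS
  nlinarith [sq_nonneg ‖∑ i, u i‖, sq_nonneg ‖∑ i, v i‖]

theorem card_mul_sum_inner_sub_inner_sum_eq_sq_iff (hu : ∀ i, ‖u i‖ = 1) (hv : ∀ i, ‖v i‖ = 1) :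
    (Fintype.card ι : ℝ) * ∑ i, ⟪v i, u i⟫ - ⟪∑ i, v i, ∑ i, u i⟫ = (Fintype.card ι : ℝ) ^ 2 ↔
      ∑ i, u i = 0 ∧ ∀ i, v i = u i := by
  constructor
  · intro heq
    have hCS := norm_sum_sq_le_card_mul_sum_norm_sq univ fun i ↦ v i - u i
    rw [card_mul_sum_inner_sub_inner_sum_eq hu hv] at heq
    rw [card_univ] at hCS
    have hS : ‖∑ i, u i‖ ^ 2 = 0 := by nlinarith [sq_nonneg ‖∑ i, u i‖, sq_nonneg ‖∑ i, v i‖]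
    have hT : ‖∑ i, v i‖ ^ 2 = 0 := by nlinarith [sq_nonneg ‖∑ i, u i‖, sq_nonneg ‖∑ i, v i‖]
    simp only [sq_eq_zero_iff, norm_eq_zero] at hS hT
    rw [sum_sub_distrib, hS, hT, sub_zero, norm_zero] at heq
    refine ⟨hS, fun i ↦ ?_⟩
    have hcard : (0 : ℝ) < Fintype.card ι := Nat.cast_pos.mpr (Fintype.card_pos_iff.mpr ⟨i⟩)
    have hw : ∑ j, ‖v j - u j‖ ^ 2 = 0 := by nlinarith
    have hwi := (sum_eq_zero_iff_of_nonneg fun j _ ↦ sq_nonneg ‖v j - u j‖).mp hw i (mem_univ i)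
    simpa [sub_eq_zero] using hwi
  · rintro ⟨hS, hvu⟩
    simp only [hvu, hS, inner_zero_right, real_inner_self_eq_norm_sq, hu, sum_const,
      card_univ, nsmul_eq_mul, mul_one, sub_zero, sq]

end UnitVectors

theorem stmt_14_general (d M : ℕ)
    (U V : Fin M → EuclideanSpace ℝ (Fin d))
    (hU : ∀ i, ‖U i‖ = 1) (hV : ∀ i, ‖V i‖ = 1) :
    ((M : ℝ) * ∑ i, ⟪V i, U i⟫ - ⟪∑ i, V i, ∑ i, U i⟫ ≤ (M : ℝ) ^ 2) ∧
      ((M : ℝ) * ∑ i, ⟪V i, U i⟫ - ⟪∑ i, V i, ∑ i, U i⟫ = (M : ℝ) ^ 2 ↔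
        (∑ i, U i = 0 ∧ ∀ i, V i = U i)) := by
  have hcard : (Fintype.card (Fin M) : ℝ) = M := by rw [Fintype.card_fin]
  rw [← hcard]
  exact ⟨card_mul_sum_inner_sub_inner_sum_le hU hV, card_mul_sum_inner_sub_inner_sum_eq_sq_iff hU hV⟩

theorem stmt_14 (d M : ℕ) (hM : 2 ≤ M) (hd : 1 ≤ d)
    (U V : Fin M → EuclideanSpace ℝ (Fin d))
    (hU : ∀ i, ‖U i‖ = 1) (hV : ∀ i, ‖V i‖ = 1) :
    ((M : ℝ) * ∑ i, ⟪V i, U i⟫ - ⟪∑ i, V i, ∑ i, U i⟫ ≤ (M : ℝ) ^ 2) ∧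
      ((M : ℝ) * ∑ i, ⟪V i, U i⟫ - ⟪∑ i, V i, ∑ i, U i⟫ = (M : ℝ) ^ 2 ↔
        (∑ i, U i = 0 ∧ ∀ i, V i = U i)) :=
  stmt_14_general d M U V hU hV
end

section
/- Let M ≥ 2, d ≥ 1 and let u_1,…,u_M, v_1,…,v_M be unit vectors in ℝ^d. Then (2M−1) Σ_{i=1}^M (v_i + u_i)·u_i − (Σ_{i=1}^M (v_i + u_i))·(Σ_{j=1}^M u_j) ≤ 2M(2M−1). -/
/-!
With `c = 2M - 1`, the left-hand side is `B (V + U) U` for the symmetric bilinear form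
`B x y = c ∑ ⟪x i, y i⟫ - ⟪∑ x i, ∑ y i⟫`, whose matrix `c I - 𝟙 𝟙ᵀ` has eigenvalues `c` and
`c - M`. Since `c ≥ M`, the form is positive semidefinite and `B x x ≤ c ∑ ‖x i‖ ^ 2`, so
`2 B x y ≤ B x x + B y y`. Applied to `x = V + U` and `y = 2 U`, whose squared norms sum to at
most `4M` each, this gives `4 B (V + U) U ≤ 8cM`.
-/

open scoped BigOperators RealInnerProductSpace

lemma norm_sum_sq_le_card_mul {ι E : Type*} [Fintype ι] [SeminormedAddCommGroup E]
    (x : ι → E) : ‖∑ i, x i‖ ^ 2 ≤ Fintype.card ι * ∑ i, ‖x i‖ ^ 2 :=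
  calc ‖∑ i, x i‖ ^ 2 ≤ (∑ i, ‖x i‖) ^ 2 := by gcongr; exact norm_sum_le _ _
    _ ≤ Fintype.card ι * ∑ i, ‖x i‖ ^ 2 := sq_sum_le_card_mul_sum_sq

lemma sum_norm_add_sq_le {ι E : Type*} [Fintype ι] [SeminormedAddCommGroup E] (x y : ι → E)
    (hx : ∀ i, ‖x i‖ = 1) (hy : ∀ i, ‖y i‖ = 1) :
    ∑ i, ‖(x + y) i‖ ^ 2 ≤ 4 * Fintype.card ι := by
  calc ∑ i, ‖(x + y) i‖ ^ 2 ≤ ∑ _i : ι, (1 + 1 : ℝ) ^ 2 := by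
        gcongr with i
        exact (norm_add_le _ _).trans_eq (by rw [hx, hy])
    _ = 4 * Fintype.card ι := by simp; ring

section BatchForm

variable {ι E : Type*} [Fintype ι] [NormedAddCommGroup E] [InnerProductSpace ℝ E]

def batchForm (c : ℝ) (x y : ι → E) : ℝ :=
  c * ∑ i, ⟪x i, y i⟫ - ⟪∑ i, x i, ∑ i, y i⟫

lemma batchForm_self (c : ℝ) (x : ι → E) :
    batchForm c x x = c * ∑ i, ‖x i‖ ^ 2 - ‖∑ i, x i‖ ^ 2 := by
  simp only [batchForm, real_inner_self_eq_norm_sq]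

lemma batchForm_self_le (c : ℝ) (x : ι → E) : batchForm c x x ≤ c * ∑ i, ‖x i‖ ^ 2 := by
  rw [batchForm_self]
  linarith [sq_nonneg ‖∑ i, x i‖]

lemma batchForm_self_nonneg {c : ℝ} (hc : Fintype.card ι ≤ c) (x : ι → E) :
    0 ≤ batchForm c x x := by
  rw [batchForm_self]
  have hsum : 0 ≤ ∑ i, ‖x i‖ ^ 2 := by positivity
  linarith [norm_sum_sq_le_card_mul x, mul_le_mul_of_nonneg_right hc hsum]

lemma batchForm_sub_sub (c : ℝ) (x y : ι → E) :
    batchForm c (x - y) (x - y) = batchForm c x x - 2 * batchForm c x y + batchForm c y y := by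
  simp only [batchForm, Pi.sub_apply, inner_sub_left, inner_sub_right,
    Finset.sum_sub_distrib, real_inner_comm (y _) (x _), real_inner_comm (∑ i, y i)]
  ring

lemma two_mul_batchForm_le {c : ℝ} (hc : Fintype.card ι ≤ c) (x y : ι → E) :
    2 * batchForm c x y ≤ c * (∑ i, ‖x i‖ ^ 2 + ∑ i, ‖y i‖ ^ 2) := by
  have hdiff := batchForm_self_nonneg hc (x - y)
  rw [batchForm_sub_sub] at hdiff
  linarith [batchForm_self_le c x, batchForm_self_le c y]

lemma batchForm_smul_right (c t : ℝ) (x y : ι → E) :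
    batchForm c x (t • y) = t * batchForm c x y := by
  simp only [batchForm, Pi.smul_apply, ← Finset.smul_sum, real_inner_smul_right, ← Finset.mul_sum]
  ring

end BatchForm

theorem stmt_16_general (d M : ℕ) (hM : 2 ≤ M)
    (U V : Fin M → EuclideanSpace ℝ (Fin d))
    (hU : ∀ i, ‖U i‖ = 1) (hV : ∀ i, ‖V i‖ = 1) :
    (2 * (M : ℝ) - 1) * ∑ i, ⟪V i + U i, U i⟫ -
        ⟪∑ i, (V i + U i), ∑ j, U j⟫ ≤
      2 * (M : ℝ) * (2 * (M : ℝ) - 1) := by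
  have hM' : (2 : ℝ) ≤ M := by exact_mod_cast hM
  have hc : (Fintype.card (Fin M) : ℝ) ≤ 2 * M - 1 := by rw [Fintype.card_fin]; linarith
  have hVU : ∑ i, ‖(V + U) i‖ ^ 2 ≤ 4 * M := by
    simpa using sum_norm_add_sq_le V U hV hU
  have h2U : ∑ i, ‖((2 : ℝ) • U) i‖ ^ 2 = 4 * M := by simp [norm_smul, hU]; ring
  change batchForm (2 * (M : ℝ) - 1) (V + U) U ≤ _
  have key := two_mul_batchForm_le hc (V + U) ((2 : ℝ) • U)
  rw [batchForm_smul_right, h2U] at key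
  linarith [mul_le_mul_of_nonneg_left hVU (by linarith : (0 : ℝ) ≤ 2 * M - 1)]

theorem stmt_16 (d M : ℕ) (hM : 2 ≤ M) (hd : 1 ≤ d)
    (U V : Fin M → EuclideanSpace ℝ (Fin d))
    (hU : ∀ i, ‖U i‖ = 1) (hV : ∀ i, ‖V i‖ = 1) :
    (2 * (M : ℝ) - 1) * ∑ i, ⟪V i + U i, U i⟫ -
        ⟪∑ i, (V i + U i), ∑ j, U j⟫ ≤
      2 * (M : ℝ) * (2 * (M : ℝ) - 1) :=
  stmt_16_general d M hM U V hU hV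
end
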